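/- arXiv:1912.08045 — 3 statements merged into one kernel-verified Lean document; each statement's English description precedes it below -/
import Mathlib

section
/- Let s ≥ 2 and n ≥ 1 be natural numbers and set h = ⌊n/2⌋. Let X' be a subset of the digit positions {0,…,h−1} and Y' a subset of the positions {h,…,n−1}. Then there exist a natural number b < s^n and a fixed choice of digits c : ({0,…,n−1} \ X') → {0,…,s−1} such that, writing A_φ = Σ_{i∈X'} φ(i)·sⁱ + Σ_{i∈{0,…,n−1}\X'} c(i)·sⁱ for each assignment φ : X' → {0,…,s−1}, the number N of distinct tuples ( ((A_φ·b)/sⁱ) mod s )_{i∈Y'}, as φ ranges over all s^{|X'|} assignments, satisfies N^n ≥ s^{|X'|·|Y'|}. -/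
/-!
Take `b = s ^ t` and all free digits zero. Multiplying by `s ^ t` moves digit `x` of `A` to
position `x + t`, so the digits of the product at `Y'` determine `φ` on
`{x ∈ X' | x + t ∈ Y'}` and take at least `s ^ #{x ∈ X' | x + t ∈ Y'}` values. Every pair
`(x, y) ∈ X' × Y'` has `x < y` and is counted by exactly one shift `t = y - x < n`, so these
sets have total size `|X'|·|Y'|` over `t < n`, and some shift gets at least the average.
-/

open Finset

section Digits

variable {ι : Type*} {s : ℕ} {I : Finset ι} {p : ι → ℕ} {d : ι → ℕ}

theorem sum_mul_pow_lt_pow (hs : 0 < s) (hp : Set.InjOn p I) (hd : ∀ i ∈ I, d i < s) {x : ℕ}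
    (hpx : ∀ i ∈ I, p i < x) : ∑ i ∈ I, d i * s ^ p i < s ^ x := by
  obtain ⟨a, rfl⟩ : ∃ a, s = a + 1 := ⟨s - 1, by omega⟩
  calc ∑ i ∈ I, d i * (a + 1) ^ p i
      ≤ ∑ i ∈ I, a * (a + 1) ^ p i :=
        sum_le_sum fun i hi ↦ by gcongr; exact Nat.le_of_lt_succ (hd i hi)
    _ = (∑ j ∈ I.image p, (a + 1) ^ j) * a := by rw [sum_image hp, sum_mul]; simp only [mul_comm]
    _ ≤ (∑ j ∈ range x, (a + 1) ^ j) * a := by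
        gcongr
        · intro j hj
          obtain ⟨i, hi, rfl⟩ := mem_image.1 hj
          exact mem_range.2 (hpx i hi)
    _ < (a + 1) ^ x := by rw [← geom_sum_mul_add a x]; omega

theorem sum_mul_pow_div_pow_mod (hp : Set.InjOn p I) (hd : ∀ i ∈ I, d i < s) {k : ι}
    (hk : k ∈ I) : (∑ i ∈ I, d i * s ^ p i) / s ^ p k % s = d k := by
  classical
  have hs : 0 < s := Nat.zero_lt_of_lt (hd k hk)
  set low := (I.erase k).filter (p · < p k)
  set high := (I.erase k).filter (¬ p · < p k)
  have hhigh : ∑ i ∈ high, d i * s ^ p i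
      = s ^ p k * (s * ∑ i ∈ high, d i * s ^ (p i - p k - 1)) := by
    rw [mul_sum, mul_sum]
    refine sum_congr rfl fun i hi ↦ ?_
    obtain ⟨⟨hik, hi⟩, hlt⟩ := by simpa [high] using hi
    have : p i ≠ p k := fun h ↦ hik (hp hi hk h)
    rw [← mul_assoc, ← pow_succ, mul_left_comm, ← pow_add]; congr 2; omega
  have hsplit : ∑ i ∈ I, d i * s ^ p i = ∑ i ∈ low, d i * s ^ p i
      + s ^ p k * (d k + s * ∑ i ∈ high, d i * s ^ (p i - p k - 1)) := by
    rw [← sum_erase_add I _ hk, ← sum_filter_add_sum_filter_not (I.erase k) (p · < p k)]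
    change _ + ∑ i ∈ high, _ + _ = _
    rw [hhigh]; ring
  have hlow : ∑ i ∈ low, d i * s ^ p i < s ^ p k :=
    sum_mul_pow_lt_pow hs (hp.mono fun i hi ↦ mem_of_mem_erase (mem_of_mem_filter i hi))
      (fun i hi ↦ hd i (mem_of_mem_erase (mem_of_mem_filter i hi))) fun i hi ↦ (mem_filter.1 hi).2
  rw [hsplit, Nat.add_mul_div_left _ _ (pow_pos hs _), Nat.div_eq_of_lt hlow, zero_add,
    Nat.add_mul_mod_self_left, Nat.mod_eq_of_lt (hd k hk)]

end Digits

section Shifts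

variable {X Y : Finset ℕ} {n : ℕ}

theorem card_filter_add_mem_eq_card (hY : ∀ y ∈ Y, y < n) {x : ℕ} (hxY : ∀ y ∈ Y, x ≤ y) :
    #{t ∈ range n | x + t ∈ Y} = #Y :=
  card_nbij' (x + ·) (· - x) (fun t ht ↦ (mem_filter.1 ht).2)
    (fun y hy ↦ mem_filter.2 ⟨mem_range.2 ((Nat.sub_le y x).trans_lt (hY y hy)),
      by rwa [Nat.add_sub_cancel' (hxY y hy)]⟩)
    (fun t _ ↦ by simp) fun y hy ↦ by simp [Nat.add_sub_cancel' (hxY y hy)]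

theorem sum_card_filter_add_mem_eq_mul (hY : ∀ y ∈ Y, y < n) (hXY : ∀ x ∈ X, ∀ y ∈ Y, x ≤ y) :
    ∑ t ∈ range n, #{x ∈ X | x + t ∈ Y} = #X * #Y := by
  simp_rw [card_filter]
  rw [sum_comm, card_eq_sum_ones X, sum_mul]
  refine sum_congr rfl fun x hx ↦ ?_
  rw [one_mul, ← card_filter, card_filter_add_mem_eq_card hY (hXY x hx)]

theorem exists_mul_card_le_mul_card_filter_add_mem (hn : 0 < n) (hY : ∀ y ∈ Y, y < n)
    (hXY : ∀ x ∈ X, ∀ y ∈ Y, x ≤ y) : ∃ t < n, #X * #Y ≤ n * #{x ∈ X | x + t ∈ Y} := by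
  obtain ⟨t, ht, hle⟩ := exists_le_of_sum_le (nonempty_range_iff.2 hn.ne')
    (f := fun _ ↦ #X * #Y) (g := fun t ↦ n * #{x ∈ X | x + t ∈ Y})
    (by rw [sum_const, card_range, smul_eq_mul, ← mul_sum, sum_card_filter_add_mem_eq_mul hY hXY])
  exact ⟨t, mem_range.1 ht, hle⟩

end Shifts

theorem pow_card_filter_add_mem_le_card_image {s : ℕ} (hs : 0 < s) (X Y : Finset ℕ) (t : ℕ) :
    s ^ #{x ∈ X | x + t ∈ Y} ≤ #((univ : Finset (X → Fin s)).image fun φ (i : Y) ↦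
      ((∑ j ∈ X.attach, (φ j : ℕ) * s ^ (j : ℕ)) * s ^ t / s ^ (i : ℕ)) % s) := by
  set S := X.filter (· + t ∈ Y)
  set F := fun (φ : X → Fin s) (i : Y) ↦
    ((∑ j ∈ X.attach, (φ j : ℕ) * s ^ (j : ℕ)) * s ^ t / s ^ (i : ℕ)) % s
  have hF (φ : X → Fin s) (x : X) (hx : x.1 + t ∈ Y) : F φ ⟨x + t, hx⟩ = φ x := by
    simp only [F, pow_add, Nat.mul_div_mul_right _ _ (pow_pos hs t)]
    exact sum_mul_pow_div_pow_mod Subtype.val_injective.injOn (fun j _ ↦ (φ j).2) (mem_attach _ x)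
  let extend (ψ : S → Fin s) (j : X) : Fin s := if h : j.1 ∈ S then ψ ⟨j, h⟩ else ⟨0, hs⟩
  calc s ^ #S = #(univ : Finset (S → Fin s)) := by simp
    _ ≤ #((univ : Finset (X → Fin s)).image F) := by
      refine card_le_card_of_injOn (F ∘ extend) (fun ψ _ ↦ mem_image_of_mem F (mem_univ _))
        fun ψ₁ _ ψ₂ _ h ↦ funext fun x ↦ ?_
      obtain ⟨hxX, hxY⟩ := mem_filter.1 x.2
      have := congrFun h ⟨x + t, hxY⟩
      simp only [Function.comp_apply, hF _ ⟨x, hxX⟩ hxY, extend, dif_pos x.2] at this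
      exact Fin.ext this

/-- Counting (partial Grigoriev's flow) form of the dominator-set lemma for integer
multiplication: one can fix the second factor `b` and the digits of the first factor
outside `X'` so that the digits of the product in positions `Y'` take at least
`s^(|X'|·|Y'|/n)` distinct values as the digits in positions `X'` vary. -/
theorem stmt_0 (s n : ℕ) (hs : 2 ≤ s) (hn : 1 ≤ n)
    (X' Y' : Finset ℕ) (hX : X' ⊆ Finset.range (n / 2))
    (hY : Y' ⊆ Finset.Ico (n / 2) n) :
    ∃ b : ℕ, b < s ^ n ∧ ∃ c : ℕ → ℕ, (∀ i ∈ Finset.range n \ X', c i < s) ∧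
      ((Finset.univ : Finset ({x // x ∈ X'} → Fin s)).image
          (fun φ : {x // x ∈ X'} → Fin s =>
            fun i : {y // y ∈ Y'} =>
              (((∑ j ∈ X'.attach, (φ j : ℕ) * s ^ (j : ℕ)) +
                  ∑ j ∈ Finset.range n \ X', c j * s ^ j) * b / s ^ (i : ℕ)) % s)).card
        ^ n ≥ s ^ (X'.card * Y'.card) := by
  have hYn : ∀ y ∈ Y', y < n := fun y hy ↦ (mem_Ico.1 (hY hy)).2
  have hXY : ∀ x ∈ X', ∀ y ∈ Y', x ≤ y := fun x hx y hy ↦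
    ((mem_range.1 (hX hx)).trans_le (mem_Ico.1 (hY hy)).1).le
  obtain ⟨t, htn, hcount⟩ := exists_mul_card_le_mul_card_filter_add_mem hn hYn hXY
  refine ⟨s ^ t, Nat.pow_lt_pow_right hs htn, fun _ ↦ 0, fun _ _ ↦ (by omega : 0 < s), ?_⟩
  simp only [zero_mul, sum_const_zero, add_zero]
  calc s ^ (#X' * #Y') ≤ s ^ (n * #{x ∈ X' | x + t ∈ Y'}) := Nat.pow_le_pow_right (by omega) hcount
    _ = (s ^ #{x ∈ X' | x + t ∈ Y'}) ^ n := by rw [mul_comm, pow_mul]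
    _ ≤ _ := Nat.pow_le_pow_left (pow_card_filter_add_mem_le_card_image (by omega) X' Y' t) n
end

section
/- Let s ≥ 2 and n ≥ 1 be natural numbers, T' a finite set of pairs (j,k) with j < n and k < n, J_A and J_B the sets of first and second coordinates occurring in T', and d a natural number. Suppose there exist functions H : ({0,…,s−1}^n × {0,…,s−1}^n) → {0,…,s−1}^d and G : {0,…,s−1}^d → (T' → ℕ) such that for all digit assignments a, b : {0,…,n−1} → {0,…,s−1}, G(H(a,b)) equals the tuple ((j,k) ↦ a(j)·b(k)) of elementary products indexed by T'. Then d ≥ max(|J_A|, |J_B|). -/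
/-!
Fixing one factor to the all-ones digit vector turns the elementary products `a j * 1` into the
digits of the other factor, so `a ↦ H (a, 1)` is injective on the `s ^ |J_A|` digit assignments
supported on `J_A`, while its image lies among the `s ^ d` digit strings of length `d`;
symmetrically for `J_B`.
-/

theorem card_le_of_injective_digits {ι : Type*} [Fintype ι] [DecidableEq ι] {s d : ℕ}
    (hs : 1 < s) {φ : (ι → Fin s) → (Fin d → Fin s)} (hφ : Function.Injective φ) :
    Fintype.card ι ≤ d := by
  have h := Fintype.card_le_of_injective φ hφ
  simp only [Fintype.card_fun, Fintype.card_fin] at h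
  exact (Nat.pow_le_pow_iff_right hs).mp h

theorem card_le_of_determines_digits_on {s n d : ℕ} (hs : 1 < s) (J : Finset ℕ)
    (hJ : ∀ j ∈ J, j < n) (F : (Fin n → Fin s) → (Fin d → Fin s))
    (hF : ∀ a a', F a = F a' → ∀ i : Fin n, (i : ℕ) ∈ J → a i = a' i) :
    J.card ≤ d := by
  let extend (v : J → Fin s) (i : Fin n) : Fin s :=
    if h : (i : ℕ) ∈ J then v ⟨i, h⟩ else ⟨0, by omega⟩
  have h_inj : Function.Injective (F ∘ extend) := by
    intro v v' h
    funext ⟨j, hj⟩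
    simpa [extend, hj] using hF _ _ h ⟨j, hJ j hj⟩ hj
  simpa using card_le_of_injective_digits hs h_inj

theorem stmt_8_general (s n d : ℕ) (hs : 2 ≤ s) (T' : Finset (ℕ × ℕ))
    (hT' : ∀ p ∈ T', p.1 < n ∧ p.2 < n)
    (H : (Fin n → Fin s) × (Fin n → Fin s) → (Fin d → Fin s))
    (G : (Fin d → Fin s) → ({x // x ∈ T'} → ℕ))
    (hGH : ∀ a b : Fin n → Fin s, ∀ p : {x // x ∈ T'},
      G (H (a, b)) p =
        (a ⟨p.1.1, (hT' p.1 p.2).1⟩ : ℕ) * (b ⟨p.1.2, (hT' p.1 p.2).2⟩ : ℕ)) :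
    max (T'.image Prod.fst).card (T'.image Prod.snd).card ≤ d := by
  let one : Fin n → Fin s := fun _ => ⟨1, hs⟩
  apply max_le
  · refine card_le_of_determines_digits_on hs _ ?_ (fun a => H (a, one)) ?_
    · simp only [Finset.mem_image]
      rintro _ ⟨p, hp, rfl⟩
      exact (hT' p hp).1
    · intro a a' h i hi
      obtain ⟨p, hp, hpi⟩ := Finset.mem_image.mp hi
      obtain rfl : (⟨p.1, (hT' p hp).1⟩ : Fin n) = i := Fin.ext hpi
      simpa [hGH, one, Fin.ext_iff] using congrArg (G · ⟨p, hp⟩) h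
  · refine card_le_of_determines_digits_on hs _ ?_ (fun b => H (one, b)) ?_
    · simp only [Finset.mem_image]
      rintro _ ⟨p, hp, rfl⟩
      exact (hT' p hp).2
    · intro b b' h i hi
      obtain ⟨p, hp, hpi⟩ := Finset.mem_image.mp hi
      obtain rfl : (⟨p.2, (hT' p hp).2⟩ : Fin n) = i := Fin.ext hpi
      simpa [hGH, one, Fin.ext_iff] using congrArg (G · ⟨p, hp⟩) h

/-- Information-flow form of Lemma `domtype3`: if the tuple of elementary products
`A[j]·B[k]` indexed by `T'` factors through `d` intermediate values each stored as one
base-`s` digit, then `d ≥ max(|J_A|, |J_B|)`, where `J_A` (resp. `J_B`) is the set of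
first (resp. second) coordinates occurring in `T'`. -/
theorem stmt_8 (s n d : ℕ) (hs : 2 ≤ s) (hn : 1 ≤ n) (T' : Finset (ℕ × ℕ))
    (hT' : ∀ p ∈ T', p.1 < n ∧ p.2 < n)
    (H : (Fin n → Fin s) × (Fin n → Fin s) → (Fin d → Fin s))
    (G : (Fin d → Fin s) → ({x // x ∈ T'} → ℕ))
    (hGH : ∀ a b : Fin n → Fin s, ∀ p : {x // x ∈ T'},
      G (H (a, b)) p =
        (a ⟨p.1.1, (hT' p.1 p.2).1⟩ : ℕ) * (b ⟨p.1.2, (hT' p.1 p.2).2⟩ : ℕ)) :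
    max (T'.image Prod.fst).card (T'.image Prod.snd).card ≤ d :=
  stmt_8_general s n d hs T' hT' H G hGH
end

section
/- Let k ≥ 1 and let x : Fin(2k−1) → ℚ be injective (i.e., x₀,…,x_{2k−2} are 2k−1 distinct evaluation points). Let p and q be polynomials over ℚ each of degree at most k−1, and let V be the (2k−1)×(2k−1) Vandermonde matrix with entries V_{ij} = x_iʲ for 0 ≤ i,j ≤ 2k−2. Then V is invertible, and the vector w = V⁻¹ · ( p(x₀)q(x₀), …, p(x_{2k−2})q(x_{2k−2}) )ᵀ satisfies w_i = (the coefficient of xⁱ in p·q) for all 0 ≤ i ≤ 2k−2; equivalently, for every z ∈ ℚ, Σ_{i=0}^{2k−2} w_i zⁱ = p(z)·q(z). -/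
/-! The product `p * q` has degree at most `2k - 2`, so its first `2k - 1` coefficients `c`
determine it and satisfy `V c = ((p * q)(x_j))_j`. Distinct points make `det V` nonzero, hence
`c = V⁻¹ ((p * q)(x_j))_j`, and re-evaluating `c` is evaluating `p * q`. -/

open Matrix Polynomial

namespace Polynomial

variable {R : Type*} [Semiring R]

theorem degree_mul_lt_of_degree_le {p q : R[X]} {m n : ℕ} (hp : p.degree ≤ m)
    (hq : q.degree ≤ n) : (p * q).degree < (m + n + 1 : ℕ) :=
  (degree_mul_le p q).trans_lt <| (add_le_add hp hq).trans_lt <| by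
    exact_mod_cast Nat.lt_succ_self (m + n)

theorem eval_eq_sum_fin {f : R[X]} {n : ℕ} (hf : f.degree < n) (z : R) :
    f.eval z = ∑ i : Fin n, f.coeff i * z ^ (i : ℕ) := by
  rw [eval_eq_sum, ← sum_fin _ (by simp) hf]

end Polynomial

namespace Matrix

theorem isUnit_vandermonde {K : Type*} [Field K] {n : ℕ} {v : Fin n → K}
    (hv : Function.Injective v) : IsUnit (vandermonde v) :=
  (isUnit_iff_isUnit_det _).mpr (det_vandermonde_ne_zero_iff.mpr hv).isUnit

theorem vandermonde_mulVec_coeff {R : Type*} [CommRing R] {n : ℕ} (v : Fin n → R) {f : R[X]}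
    (hf : f.degree < n) :
    vandermonde v *ᵥ (fun i : Fin n => f.coeff i) = fun j => f.eval (v j) := by
  funext j
  simp only [mulVec, dotProduct, vandermonde_apply, eval_eq_sum_fin hf, mul_comm]

theorem vandermonde_inv_mulVec_eval {K : Type*} [Field K] {n : ℕ} {v : Fin n → K}
    (hv : Function.Injective v) {f : K[X]} (hf : f.degree < n) :
    (vandermonde v)⁻¹ *ᵥ (fun j => f.eval (v j)) = fun i : Fin n => f.coeff i := by
  rw [← vandermonde_mulVec_coeff v hf, mulVec_mulVec,
    nonsing_inv_mul _ ((isUnit_iff_isUnit_det _).mp (isUnit_vandermonde hv)), one_mulVec]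

end Matrix

/-- Correctness of the Evaluation/Interpolation/Recomposition steps of the Toom-k
scheme: for `2k−1` distinct evaluation points, the Vandermonde matrix is invertible,
and applying its inverse to the vector of evaluations `p(x_i)·q(x_i)` recovers the
coefficients of the product polynomial `p·q`; equivalently, these recovered
coefficients re-evaluate to `p(z)·q(z)` at every point `z`. -/
theorem stmt_12 (k : ℕ) (hk : 1 ≤ k) (x : Fin (2 * k - 1) → ℚ)
    (hx : Function.Injective x)
    (p q : Polynomial ℚ) (hp : p.degree ≤ (k - 1 : ℕ)) (hq : q.degree ≤ (k - 1 : ℕ)) :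
    IsUnit (Matrix.vandermonde x) ∧
    (∀ i : Fin (2 * k - 1),
      ((Matrix.vandermonde x)⁻¹ *ᵥ (fun j => p.eval (x j) * q.eval (x j))) i
        = (p * q).coeff (i : ℕ)) ∧
    (∀ z : ℚ,
      ∑ i : Fin (2 * k - 1),
        ((Matrix.vandermonde x)⁻¹ *ᵥ (fun j => p.eval (x j) * q.eval (x j))) i
          * z ^ (i : ℕ)
        = p.eval z * q.eval z) := by
  have hpq : (p * q).degree < (2 * k - 1 : ℕ) := by
    convert degree_mul_lt_of_degree_le hp hq using 2
    omega
  have hcoeff := vandermonde_inv_mulVec_eval hx hpq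
  simp only [eval_mul] at hcoeff
  refine ⟨isUnit_vandermonde hx, fun i => by rw [hcoeff], fun z => ?_⟩
  rw [hcoeff, ← eval_mul, eval_eq_sum_fin hpq]
end
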